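/- arXiv:1306.2529 — 4 statements merged into one kernel-verified Lean document; each statement's English description precedes it below -/
import Mathlib

section
/- Let m, n, a, b, k be positive integers with gcd(a, b) = 1, and let Φ_k^{(a,b)}(m, n) denote the number of subsets A of {a, a+b, ..., a+(m−1)b} with |A| = k and gcd(A ∪ {n}) = 1. Then Φ_k^{(a,b)}(m, n) = Σ_{d ∣ n, gcd(b,d)=1} μ(d)·C(⌊m/d⌋+ε_d, k), where C(n, k) is the binomial coefficient, and ε_d = 1 if d ∤ m and the residue of −a·b^{−1} modulo d lies in {0, 1, ..., m − ⌊m/d⌋·d − 1} (b^{−1} being the multiplicative inverse of b modulo d), and ε_d = 0 otherwise. -/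
lemma count_mod_card (d r : ℕ) (hd : 0 < d) (hr : r < d) (m : ℕ) :
    ((Finset.range m).filter (fun i => i % d = r)).card
      = m / d + if r < m % d then 1 else 0 := by
  induction m with
  | zero => simp
  | succ m ih =>
    rw [Finset.range_add_one, Finset.filter_insert]
    have hq := Nat.mod_add_div m d
    have hslt : m % d < d := Nat.mod_lt _ hd
    have hkey : ((m+1) % d = 0 ∧ (m+1)/d = m/d + 1 ∧ m % d + 1 = d)
        ∨ ((m+1) % d = m % d + 1 ∧ (m+1)/d = m/d ∧ m % d + 1 < d) := by
      by_cases hcase : m % d + 1 = d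
      · left
        have hm1 : m + 1 = d * (m/d + 1) := by rw [Nat.mul_succ]; omega
        exact ⟨by rw [hm1]; exact Nat.mul_mod_right d _,
               by rw [hm1, Nat.mul_div_cancel_left _ hd], hcase⟩
      · right
        have hlt : m % d + 1 < d := by omega
        have hm1 : m + 1 = (m % d + 1) + d * (m/d) := by omega
        refine ⟨?_, ?_, hlt⟩
        · rw [hm1, Nat.add_mul_mod_self_left, Nat.mod_eq_of_lt hlt]
        · rw [hm1, Nat.add_mul_div_left _ _ hd, Nat.div_eq_of_lt hlt, Nat.zero_add]
    by_cases hmr : m % d = r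
    · rw [if_pos hmr, Finset.card_insert_of_notMem (by simp), ih]
      rcases hkey with ⟨h1,h2,h3⟩|⟨h1,h2,h3⟩ <;> rw [h1, h2] <;> split_ifs <;> omega
    · rw [if_neg hmr, ih]
      rcases hkey with ⟨h1,h2,h3⟩|⟨h1,h2,h3⟩ <;> rw [h1, h2] <;> split_ifs <;> omega

/-- Theorem (Ayad–Kihel): For positive integers `m, n, a, b, k` with
`gcd(a,b) = 1`, the number `Φ_k^{(a,b)}(m,n)` of subsets of cardinality `k` of
`{a, a+b, …, a+(m−1)b}` relatively prime to `n` equals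
`Σ_{d ∣ n, gcd(b,d)=1} μ(d)·C(⌊m/d⌋+ε_d, k)`. -/
theorem card_relPrimeTo_subsets_card_eq_arith_prog
    (m n a b k : ℕ) (hm : 0 < m) (hn : 0 < n) (ha : 0 < a) (hb : 0 < b)
    (hk : 0 < k) (hab : Nat.gcd a b = 1) :
    (((((Finset.range m).image (fun i => a + i * b)).powerset).filter
        (fun A => A.card = k ∧ Nat.gcd (A.gcd id) n = 1)).card : ℤ) =
    ∑ d ∈ n.divisors.filter (fun d => Nat.gcd b d = 1),
      ArithmeticFunction.moebius d *
        ((m / d +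
          (if ¬ (d ∣ m) ∧ ((-(a : ZMod d)) * (b : ZMod d)⁻¹).val < m - m / d * d
            then 1 else 0)).choose k : ℤ) := by
  classical
  have hfinj : Function.Injective (fun i => a + i * b) := by
    intro i j h
    simp only at h
    exact Nat.eq_of_mul_eq_mul_right hb (by omega)
  set S := (Finset.range m).image (fun i => a + i * b) with hS
  have hsplit : (S.powerset.filter (fun A => A.card = k ∧ Nat.gcd (A.gcd id) n = 1))
      = (S.powersetCard k).filter (fun A => Nat.gcd (A.gcd id) n = 1) := by
    rw [Finset.powersetCard_eq_filter, Finset.filter_filter]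
  rw [hsplit, Finset.card_filter]
  push_cast
  -- Möbius expansion of the indicator
  have hmob : ∀ A ∈ S.powersetCard k,
      (if Nat.gcd (A.gcd id) n = 1 then (1:ℤ) else 0)
        = ∑ d ∈ n.divisors,
            if d ∣ A.gcd id then (ArithmeticFunction.moebius d : ℤ) else 0 := by
    intro A _
    have hg : Nat.gcd (A.gcd id) n ≠ 0 := fun h => hn.ne' (Nat.eq_zero_of_gcd_eq_zero_right h)
    have h1 : ∑ d ∈ (Nat.gcd (A.gcd id) n).divisors, ArithmeticFunction.moebius d
        = if Nat.gcd (A.gcd id) n = 1 then 1 else 0 := by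
      rw [← ArithmeticFunction.coe_mul_zeta_apply, ArithmeticFunction.moebius_mul_coe_zeta,
        ArithmeticFunction.one_apply]
    rw [← h1, ← Finset.sum_filter]
    apply Finset.sum_congr _ (fun _ _ => rfl)
    ext d
    simp only [Nat.mem_divisors, Finset.mem_filter, Nat.dvd_gcd_iff]
    constructor
    · rintro ⟨⟨h1', h2⟩, _⟩; exact ⟨⟨h2, hn.ne'⟩, h1'⟩
    · rintro ⟨⟨h2, _⟩, h1'⟩; exact ⟨⟨h1', h2⟩, hg⟩
  rw [Finset.sum_congr rfl hmob, Finset.sum_comm]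
  -- inner sums count subsets of the filtered set
  have hinner : ∀ d ∈ n.divisors,
      (∑ A ∈ S.powersetCard k,
          if d ∣ A.gcd id then (ArithmeticFunction.moebius d : ℤ) else 0)
        = ArithmeticFunction.moebius d *
            ((((Finset.range m).filter (fun i => d ∣ a + i * b)).card.choose k : ℤ)) := by
    intro d _
    have hfil : (S.powersetCard k).filter (fun A => d ∣ A.gcd id)
        = (S.filter (fun x => d ∣ x)).powersetCard k := by
      ext A
      simp only [Finset.mem_filter, Finset.mem_powersetCard, Finset.subset_iff,
        Finset.mem_filter]
      constructor
      · rintro ⟨⟨hsub, hcard⟩, hdvd⟩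
        exact ⟨fun x hx => ⟨hsub hx, hdvd.trans (Finset.gcd_dvd hx)⟩, hcard⟩
      · rintro ⟨h, hcard⟩
        exact ⟨⟨fun x hx => (h hx).1, hcard⟩, Finset.dvd_gcd (fun x hx => (h hx).2)⟩
    have hSd : (S.filter (fun x => d ∣ x))
        = ((Finset.range m).filter (fun i => d ∣ a + i * b)).image (fun i => a + i * b) := by
      rw [hS, Finset.filter_image]
    calc (∑ A ∈ S.powersetCard k,
          if d ∣ A.gcd id then (ArithmeticFunction.moebius d : ℤ) else 0)
        = ∑ A ∈ (S.powersetCard k).filter (fun A => d ∣ A.gcd id),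
            (ArithmeticFunction.moebius d : ℤ) := (Finset.sum_filter _ _).symm
      _ = ((S.powersetCard k).filter (fun A => d ∣ A.gcd id)).card
            * (ArithmeticFunction.moebius d : ℤ) := by
            rw [Finset.sum_const, nsmul_eq_mul]
      _ = _ := by
            rw [hfil, Finset.card_powersetCard, hSd,
              Finset.card_image_of_injective _ hfinj, mul_comm]
  rw [Finset.sum_congr rfl hinner]
  -- restrict to divisors coprime to b
  rw [← Finset.sum_subset (Finset.filter_subset (fun d => Nat.gcd b d = 1) n.divisors)
      (by
        intro d hd hdf
        simp only [Finset.mem_filter, hd, true_and] at hdf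
        have hempty : (Finset.range m).filter (fun i => d ∣ a + i * b) = ∅ := by
          rw [Finset.filter_eq_empty_iff]
          intro i _
          intro hdvd
          have h1 : Nat.gcd b d ∣ a := by
            have hib : Nat.gcd b d ∣ i * b := Dvd.dvd.mul_left (Nat.gcd_dvd_left b d) i
            have hsum : Nat.gcd b d ∣ a + i * b := (Nat.gcd_dvd_right b d).trans hdvd
            have := Nat.dvd_sub hsum hib
            simpa using this
          have : Nat.gcd b d ∣ 1 := hab ▸ Nat.dvd_gcd h1 (Nat.gcd_dvd_left b d)
          exact hdf (Nat.eq_one_of_dvd_one this)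
        rw [hempty]
        simp [Nat.choose_eq_zero_of_lt hk])]
  -- now term-by-term identification
  apply Finset.sum_congr rfl
  intro d hd
  simp only [Finset.mem_filter, Nat.mem_divisors] at hd
  obtain ⟨⟨hdn, -⟩, hbd⟩ := hd
  have hd0 : 0 < d := Nat.pos_of_dvd_of_pos hdn hn
  haveI : NeZero d := ⟨hd0.ne'⟩
  set r := ((-(a : ZMod d)) * (b : ZMod d)⁻¹).val with hr
  have hrd : r < d := ZMod.val_lt _
  have hbu : IsUnit (b : ZMod d) := (ZMod.isUnit_iff_coprime b d).mpr hbd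
  have hbb : (b : ZMod d) * (b : ZMod d)⁻¹ = 1 := ZMod.mul_inv_of_unit _ hbu
  have hiff : ∀ i : ℕ, (d ∣ a + i * b) ↔ i % d = r := by
    intro i
    rw [← ZMod.natCast_eq_zero_iff]
    push_cast
    constructor
    · intro h
      have h2 : (i : ZMod d) = -(a : ZMod d) * (b : ZMod d)⁻¹ := by
        linear_combination (b : ZMod d)⁻¹ * h - (i : ZMod d) * hbb
      rw [hr, ← h2, ZMod.val_natCast]
    · intro h
      have h2 : (i : ZMod d) = -(a : ZMod d) * (b : ZMod d)⁻¹ := by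
        have : (i : ZMod d) = ((r : ℕ) : ZMod d) := by
          rw [ZMod.natCast_eq_natCast_iff', h, Nat.mod_eq_of_lt hrd]
        rw [this, hr, ZMod.natCast_val, ZMod.cast_id]
      linear_combination (b : ZMod d) * h2 - (a : ZMod d) * hbb
  have hfc : (Finset.range m).filter (fun i => d ∣ a + i * b)
      = (Finset.range m).filter (fun i => i % d = r) :=
    Finset.filter_congr (fun i _ => hiff i)
  rw [hfc, count_mod_card d r hd0 hrd m]
  have hmdeq : m % d = m - m / d * d := by
    have := Nat.mod_add_div' m d
    omega
  have hcond : (¬ d ∣ m ∧ r < m - m / d * d) ↔ r < m % d := by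
    rw [← hmdeq]
    constructor
    · exact fun h => h.2
    · intro h
      refine ⟨fun hdm => ?_, h⟩
      have h0 : m % d = 0 := Nat.mod_eq_zero_of_dvd hdm
      omega
  simp only [hcond]
end

section
/- Let X be a nonempty finite set of positive integers and let n be a positive integer. For each positive integer d let X_d = {x ∈ X : d ∣ x}. Then the number of nonempty subsets A of X with gcd(A ∪ {n}) = 1 equals Σ_{d ∣ n} μ(d)·(2^{|X_d|} − 1). -/
open Finset
local notation "μ" => ArithmeticFunction.moebius

private lemma sum_moebius_divisors (m : ℕ) :
    ∑ d ∈ m.divisors, (μ d : ℤ) = if m = 1 then 1 else 0 := by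
  rw [← ArithmeticFunction.coe_mul_zeta_apply, ArithmeticFunction.moebius_mul_coe_zeta,
    ArithmeticFunction.one_apply]

/-- Equation (6): For a nonempty finite set `X` of positive integers and a
positive integer `n`, the number `Φ(X, n)` of nonempty subsets of `X`
relatively prime to `n` equals `Σ_{d ∣ n} μ(d)·(2^{|X_d|} − 1)`. -/
theorem card_relPrimeTo_subsets
    (X : Finset ℕ) (hX : X.Nonempty) (hpos : ∀ x ∈ X, 0 < x)
    (n : ℕ) (hn : 0 < n) :
    ((X.powerset.filter (fun A => A.Nonempty ∧ Nat.gcd (A.gcd id) n = 1)).card : ℤ) =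
    ∑ d ∈ n.divisors,
      ArithmeticFunction.moebius d * (2 ^ (X.filter (fun x => d ∣ x)).card - 1) := by
  classical
  have h1 : ((X.powerset.filter (fun A => A.Nonempty ∧ Nat.gcd (A.gcd id) n = 1)).card : ℤ)
      = ∑ A ∈ X.powerset.filter (fun A => A.Nonempty),
          if Nat.gcd (A.gcd id) n = 1 then (1 : ℤ) else 0 := by
    rw [← Finset.sum_filter, Finset.filter_filter]
    simp
  rw [h1]
  have h2 : ∀ A ∈ X.powerset.filter (fun A => A.Nonempty),
      (if Nat.gcd (A.gcd id) n = 1 then (1 : ℤ) else 0)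
        = ∑ d ∈ n.divisors, if d ∣ A.gcd id then (μ d : ℤ) else 0 := by
    intro A _
    rw [← Finset.sum_filter]
    have hdiv : n.divisors.filter (fun d => d ∣ A.gcd id)
        = (Nat.gcd (A.gcd id) n).divisors := by
      ext d
      simp only [Finset.mem_filter, Nat.mem_divisors, Nat.dvd_gcd_iff]
      constructor
      · rintro ⟨⟨hdn, hn0⟩, hdg⟩
        exact ⟨⟨hdg, hdn⟩, fun h => hn0 (Nat.eq_zero_of_gcd_eq_zero_right h)⟩
      · rintro ⟨⟨hdg, hdn⟩, _⟩
        exact ⟨⟨hdn, hn.ne'⟩, hdg⟩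
    rw [hdiv, sum_moebius_divisors]
  rw [Finset.sum_congr rfl h2, Finset.sum_comm]
  refine Finset.sum_congr rfl fun d hd => ?_
  rw [← Finset.sum_filter, Finset.sum_const, Finset.filter_filter]
  have hset : X.powerset.filter (fun A => A.Nonempty ∧ d ∣ A.gcd id)
      = (X.filter (fun x => d ∣ x)).powerset.filter (fun A => A.Nonempty) := by
    ext A
    simp only [Finset.mem_filter, Finset.mem_powerset, Finset.dvd_gcd_iff, id,
      Finset.subset_iff, Finset.mem_filter]
    constructor
    · rintro ⟨hAX, hne, hdvd⟩
      exact ⟨fun x hx => ⟨hAX hx, hdvd x hx⟩, hne⟩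
    · rintro ⟨hAX, hne⟩
      exact ⟨fun x hx => (hAX hx).1, hne, fun x hx => (hAX hx).2⟩
  rw [hset]
  have hfe : (X.filter (fun x => d ∣ x)).powerset.filter (fun A => A.Nonempty)
      = (X.filter (fun x => d ∣ x)).powerset.erase ∅ := by
    ext A
    simp [Finset.mem_erase, Finset.nonempty_iff_ne_empty, and_comm]
  rw [hfe, Finset.card_erase_of_mem (Finset.empty_mem_powerset _), Finset.card_powerset]
  have h2le : 1 ≤ 2 ^ (X.filter (fun x => d ∣ x)).card := Nat.one_le_two_pow
  rw [nsmul_eq_mul, Nat.cast_sub h2le]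
  push_cast
  ring
end

section
/- Let X be a nonempty finite set of positive integers and let k be a positive integer. For each positive integer d let X_d = {x ∈ X : d ∣ x}. Then the number of subsets A of X with |A| = k and gcd(A) = 1 equals Σ_{d=1}^{max X} μ(d)·C(|X_d|, k), where C(n, k) is the binomial coefficient. -/
open Finset

lemma moebius_sum_divisors (g : ℕ) :
    ∑ d ∈ g.divisors, (ArithmeticFunction.moebius d : ℤ) = if g = 1 then 1 else 0 := by
  have h : ((ArithmeticFunction.zeta : ArithmeticFunction ℤ) * ArithmeticFunction.moebius : ArithmeticFunction ℤ) g =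
      (1 : ArithmeticFunction ℤ) g := by
    rw [ArithmeticFunction.coe_zeta_mul_moebius]
  rwa [ArithmeticFunction.coe_zeta_mul_apply, ArithmeticFunction.one_apply] at h

/-- Equation (7): For a nonempty finite set `X` of positive integers and a
positive integer `k`, the number `f_k(X)` of relatively prime subsets of `X`
of cardinality `k` equals `Σ_{d=1}^{max X} μ(d)·C(|X_d|, k)`. -/
theorem card_relPrime_subsets_card_eq
    (X : Finset ℕ) (hX : X.Nonempty) (hpos : ∀ x ∈ X, 0 < x)
    (k : ℕ) (hk : 0 < k) :
    ((X.powerset.filter (fun A => A.card = k ∧ A.gcd id = 1)).card : ℤ) =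
    ∑ d ∈ Finset.Icc 1 (X.max' hX),
      ArithmeticFunction.moebius d * ((X.filter (fun x => d ∣ x)).card.choose k : ℤ) := by
  set M := X.max' hX with hM
  -- rewrite choose as card of a filtered set of k-subsets
  have step1 : ∀ d ∈ Finset.Icc 1 M,
      (ArithmeticFunction.moebius d : ℤ) * ((X.filter (fun x => d ∣ x)).card.choose k : ℤ) =
      ∑ A ∈ X.powersetCard k,
        if d ∣ A.gcd id then (ArithmeticFunction.moebius d : ℤ) else 0 := by
    intro d _
    have hset : (X.filter (fun x => d ∣ x)).powersetCard k =
        (X.powersetCard k).filter (fun A => d ∣ A.gcd id) := by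
      ext A
      simp only [Finset.mem_powersetCard, Finset.mem_filter, Finset.subset_iff,
        Finset.mem_filter]
      constructor
      · rintro ⟨hsub, hcard⟩
        exact ⟨⟨fun {x} hx => (hsub hx).1, hcard⟩,
          Finset.dvd_gcd fun x hx => (hsub hx).2⟩
      · rintro ⟨⟨hsub, hcard⟩, hdvd⟩
        exact ⟨fun {x} hx => ⟨hsub hx, dvd_trans hdvd (Finset.gcd_dvd hx)⟩, hcard⟩
    rw [← Finset.card_powersetCard, hset, ← Finset.sum_filter, Finset.sum_const,
      nsmul_eq_mul, mul_comm]
  rw [Finset.sum_congr rfl step1, Finset.sum_comm]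
  -- inner sums: Möbius identity
  have step2 : ∀ A ∈ X.powersetCard k,
      (∑ d ∈ Finset.Icc 1 M,
        if d ∣ A.gcd id then (ArithmeticFunction.moebius d : ℤ) else 0) =
      if A.gcd id = 1 then 1 else 0 := by
    intro A hA
    rw [Finset.mem_powersetCard] at hA
    obtain ⟨hsub, hcard⟩ := hA
    have hAne : A.Nonempty := Finset.card_pos.mp (hcard ▸ hk)
    obtain ⟨a, ha⟩ := hAne
    have hax : a ∈ X := hsub ha
    have hapos : 0 < a := hpos a hax
    set g := A.gcd id with hg
    have hgdvd : g ∣ a := Finset.gcd_dvd ha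
    have hgpos : 0 < g := Nat.pos_of_ne_zero fun h => by
      rw [h] at hgdvd
      exact absurd (zero_dvd_iff.mp hgdvd) hapos.ne'
    have hgM : g ≤ M := le_trans (Nat.le_of_dvd hapos hgdvd) (Finset.le_max' X a hax)
    have hfilter : (Finset.Icc 1 M).filter (fun d => d ∣ g) = g.divisors := by
      ext d
      simp only [Finset.mem_filter, Finset.mem_Icc, Nat.mem_divisors]
      constructor
      · rintro ⟨⟨h1, h2⟩, h3⟩
        exact ⟨h3, hgpos.ne'⟩
      · rintro ⟨h1, h2⟩
        have hd0 : 0 < d := Nat.pos_of_dvd_of_pos h1 hgpos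
        exact ⟨⟨hd0, le_trans (Nat.le_of_dvd hgpos h1) hgM⟩, h1⟩
    rw [← Finset.sum_filter, hfilter, moebius_sum_divisors]
  rw [Finset.sum_congr rfl step2, Finset.sum_boole]
  have hsets : (X.powersetCard k).filter (fun A => A.gcd id = 1) =
      X.powerset.filter (fun A => A.card = k ∧ A.gcd id = 1) := by
    rw [Finset.powersetCard_eq_filter, Finset.filter_filter]
  rw [hsets]
end

section
/- Let ℓ ≥ 1 and let a_1 ≤ b_1 < a_2 ≤ b_2 < ... < a_ℓ ≤ b_ℓ be positive integers, so that the integer intervals [a_i, b_i] = {a_i, a_i+1, ..., b_i} are pairwise disjoint, and set X = [a_1,b_1] ∪ [a_2,b_2] ∪ ... ∪ [a_ℓ,b_ℓ]. Then the number of nonempty subsets A of X with gcd(A) = 1 equals Σ_{d=1}^{b_ℓ} μ(d)·(2^{Σ_{i=1}^{ℓ} (⌊b_i/d⌋ − ⌊(a_i−1)/d⌋)} − 1). -/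
/-!
Möbius inversion: for nonempty `A ⊆ X` we have `[gcd A = 1] = ∑_{d ∣ gcd A} μ d`, and after
swapping the sums `μ d` is weighted by the number of nonempty subsets of `X` all of whose elements
are multiples of `d`, i.e. by `2 ^ #{x ∈ X | d ∣ x} - 1`. Since the intervals are disjoint, the
multiples of `d` in `X` are counted interval by interval, `[a, b]` containing
`⌊b / d⌋ - ⌊(a - 1) / d⌋` of them.
-/

open Finset ArithmeticFunction
open scoped ArithmeticFunction.Moebius

theorem Nat.Ioc_filter_dvd_card_eq_div_sub_div (d m n : ℕ) :
    #{x ∈ Ioc m n | d ∣ x} = n / d - m / d := by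
  rcases le_total m n with hmn | hnm
  · have hsplit :
        #{x ∈ Ioc 0 m | d ∣ x} + #{x ∈ Ioc m n | d ∣ x} = #{x ∈ Ioc 0 n | d ∣ x} := by
      rw [← card_union_of_disjoint (disjoint_filter_filter (Ioc_disjoint_Ioc_of_le le_rfl)),
        ← filter_union, Ioc_union_Ioc_eq_Ioc (zero_le m) hmn]
    rw [Nat.Ioc_filter_dvd_card_eq_div, Nat.Ioc_filter_dvd_card_eq_div] at hsplit
    omega
  · rw [Ioc_eq_empty_of_le hnm, filter_empty, card_empty,
      Nat.sub_eq_zero_of_le (Nat.div_le_div_right hnm)]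

theorem Nat.Icc_filter_dvd_card_eq_div_sub_div (d : ℕ) {m : ℕ} (hm : 0 < m) (n : ℕ) :
    #{x ∈ Icc m n | d ∣ x} = n / d - (m - 1) / d := by
  rw [← Nat.Ioc_filter_dvd_card_eq_div_sub_div, ← Icc_add_one_left_eq_Ioc,
    Nat.sub_one_add_one hm.ne']

theorem Finset.card_filter_nonempty_dvd_gcd {α : Type*} [CommMonoidWithZero α]
    [NormalizedGCDMonoid α] [DecidableEq α] [DecidableRel (α := α) (· ∣ ·)] (X : Finset α) (d : α) :
    #{A ∈ X.powerset | A.Nonempty ∧ d ∣ A.gcd id} = 2 ^ #{x ∈ X | d ∣ x} - 1 := by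
  have hsubsets :
      {A ∈ X.powerset | A.Nonempty ∧ d ∣ A.gcd id} = {x ∈ X | d ∣ x}.powerset.erase ∅ := by
    ext A
    simp only [mem_filter, mem_powerset, dvd_gcd_iff, id, nonempty_iff_ne_empty, subset_iff]
    grind
  rw [hsubsets, card_erase_of_mem (empty_mem_powerset _), card_powerset]

theorem ArithmeticFunction.sum_divisors_moebius (n : ℕ) :
    ∑ d ∈ n.divisors, (μ d : ℤ) = if n = 1 then 1 else 0 := by
  rw [← coe_mul_zeta_apply, moebius_mul_coe_zeta, one_apply]

theorem Nat.filter_dvd_Icc_eq_divisors {n N : ℕ} (hn : n ≠ 0) (hnN : n ≤ N) :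
    {d ∈ Icc 1 N | d ∣ n} = n.divisors := by
  ext d
  simp only [mem_filter, mem_Icc, Nat.mem_divisors]
  refine ⟨fun ⟨_, hd⟩ => ⟨hd, hn⟩, fun ⟨hd, _⟩ => ⟨⟨Nat.pos_of_dvd_of_pos hd ?_, ?_⟩, hd⟩⟩
  · exact Nat.pos_of_ne_zero hn
  · exact (Nat.le_of_dvd (Nat.pos_of_ne_zero hn) hd).trans hnN

theorem card_filter_gcd_eq_one_eq_sum_moebius (X : Finset ℕ) (N : ℕ) (hX0 : 0 ∉ X)
    (hXN : ∀ x ∈ X, x ≤ N) :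
    (#{A ∈ X.powerset | A.Nonempty ∧ A.gcd id = 1} : ℤ) =
      ∑ d ∈ Icc 1 N, μ d * (2 ^ #{x ∈ X | d ∣ x} - 1) := by
  set S := {A ∈ X.powerset | A.Nonempty}
  have hgcd : ∀ A ∈ S, A.gcd id ≠ 0 ∧ A.gcd id ≤ N := by
    intro A hA
    obtain ⟨hAX, x, hx⟩ := mem_filter.mp hA
    have hxX : x ∈ X := mem_powerset.mp hAX hx
    have hx0 : 0 < x := Nat.pos_of_ne_zero fun h => hX0 (h ▸ hxX)
    exact ⟨(Nat.pos_of_dvd_of_pos (gcd_dvd hx) hx0).ne',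
      (Nat.le_of_dvd hx0 (gcd_dvd hx)).trans (hXN x hxX)⟩
  calc (#{A ∈ X.powerset | A.Nonempty ∧ A.gcd id = 1} : ℤ)
      = ∑ A ∈ S, if A.gcd id = 1 then 1 else 0 := by
        rw [← filter_filter, sum_boole]
    _ = ∑ A ∈ S, ∑ d ∈ Icc 1 N with d ∣ A.gcd id, (μ d : ℤ) := by
        refine sum_congr rfl fun A hA => ?_
        obtain ⟨hA0, hAN⟩ := hgcd A hA
        rw [Nat.filter_dvd_Icc_eq_divisors hA0 hAN, sum_divisors_moebius]
    _ = ∑ d ∈ Icc 1 N, μ d * #{A ∈ S | d ∣ A.gcd id} := by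
        simp_rw [sum_filter]
        rw [sum_comm]
        refine sum_congr rfl fun d _ => ?_
        rw [← sum_filter, sum_const, nsmul_eq_mul, mul_comm]
    _ = ∑ d ∈ Icc 1 N, μ d * (2 ^ #{x ∈ X | d ∣ x} - 1) := by
        refine sum_congr rfl fun d _ => ?_
        rw [filter_filter, card_filter_nonempty_dvd_gcd, Nat.cast_sub Nat.one_le_two_pow]
        push_cast
        rfl

section SortedIntervals

variable {ℓ : ℕ} {a b : ℕ → ℕ}

theorem lt_of_sorted_intervals (hab : ∀ i < ℓ, a i ≤ b i)
    (hord : ∀ i, i + 1 < ℓ → b i < a (i + 1)) {i j : ℕ} (hij : i < j) (hj : j < ℓ) :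
    b i < a j := by
  induction j, hij using Nat.le_induction with
  | base => exact hord i hj
  | succ k hik ih =>
    have := ih (by omega)
    have := hab k (by omega)
    have := hord k hj
    omega

theorem pairwiseDisjoint_Icc_of_sorted (hab : ∀ i < ℓ, a i ≤ b i)
    (hord : ∀ i, i + 1 < ℓ → b i < a (i + 1)) :
    (range ℓ : Set ℕ).PairwiseDisjoint fun i => Icc (a i) (b i) := by
  intro i hi j hj hij
  simp only [coe_range, Set.mem_Iio] at hi hj
  refine disjoint_left.mpr fun x hxi hxj => ?_
  simp only [mem_Icc] at hxi hxj
  rcases hij.lt_or_gt with h | h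
  · have := lt_of_sorted_intervals hab hord h hj
    omega
  · have := lt_of_sorted_intervals hab hord h hi
    omega

theorem le_last_of_mem_biUnion_Icc (hab : ∀ i < ℓ, a i ≤ b i)
    (hord : ∀ i, i + 1 < ℓ → b i < a (i + 1)) {x : ℕ}
    (hx : x ∈ (range ℓ).biUnion fun i => Icc (a i) (b i)) : x ≤ b (ℓ - 1) := by
  obtain ⟨i, hi, hxi⟩ := mem_biUnion.mp hx
  simp only [mem_range, mem_Icc] at hi hxi
  rcases (Nat.le_sub_one_of_lt hi).lt_or_eq with h | h
  · have := lt_of_sorted_intervals hab hord h (by omega)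
    have := hab (ℓ - 1) (by omega)
    omega
  · exact h ▸ hxi.2

end SortedIntervals

theorem card_filter_dvd_biUnion_Icc {ℓ : ℕ} {a b : ℕ → ℕ} (ha : ∀ i < ℓ, 0 < a i)
    (hdisj : (range ℓ : Set ℕ).PairwiseDisjoint fun i => Icc (a i) (b i)) (d : ℕ) :
    #{x ∈ (range ℓ).biUnion (fun i => Icc (a i) (b i)) | d ∣ x} =
      ∑ i ∈ range ℓ, (b i / d - (a i - 1) / d) := by
  rw [filter_biUnion, card_biUnion (hdisj.mono fun i => filter_subset _ _)]
  exact sum_congr rfl fun i hi =>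
    Nat.Icc_filter_dvd_card_eq_div_sub_div d (ha i (mem_range.mp hi)) (b i)

theorem card_relPrime_subsets_union_intervals_general
    (ℓ : ℕ) (a b : ℕ → ℕ)
    (ha : ∀ i < ℓ, 0 < a i) (hab : ∀ i < ℓ, a i ≤ b i)
    (hord : ∀ i, i + 1 < ℓ → b i < a (i + 1)) :
    ((((Finset.range ℓ).biUnion (fun i => Finset.Icc (a i) (b i))).powerset.filter
        (fun A => A.Nonempty ∧ A.gcd id = 1)).card : ℤ) =
    ∑ d ∈ Finset.Icc 1 (b (ℓ - 1)),
      ArithmeticFunction.moebius d *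
        (2 ^ (∑ i ∈ Finset.range ℓ, (b i / d - (a i - 1) / d)) - 1) := by
  have hX0 : 0 ∉ (range ℓ).biUnion fun i => Icc (a i) (b i) := by
    simp only [mem_biUnion, mem_range, mem_Icc, not_exists, not_and]
    exact fun i hi h0 => absurd h0 (ha i hi).not_ge
  rw [card_filter_gcd_eq_one_eq_sum_moebius _ _ hX0
    fun _ => le_last_of_mem_biUnion_Icc hab hord]
  simp_rw [card_filter_dvd_biUnion_Icc ha (pairwiseDisjoint_Icc_of_sorted hab hord)]

/-- Theorem 3(iv): Let `X = [a_1,b_1] ∪ … ∪ [a_ℓ,b_ℓ]` be a union of pairwise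
disjoint integer intervals of positive integers (with
`a_1 ≤ b_1 < a_2 ≤ b_2 < … < a_ℓ ≤ b_ℓ`).  Then
`f(X) = Σ_{d=1}^{b_ℓ} μ(d)·(2^{Σ_{i=1}^ℓ (⌊b_i/d⌋ − ⌊(a_i−1)/d⌋)} − 1)`. -/
theorem card_relPrime_subsets_union_intervals
    (ℓ : ℕ) (hℓ : 1 ≤ ℓ) (a b : ℕ → ℕ)
    (ha : ∀ i < ℓ, 0 < a i) (hab : ∀ i < ℓ, a i ≤ b i)
    (hord : ∀ i, i + 1 < ℓ → b i < a (i + 1)) :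
    ((((Finset.range ℓ).biUnion (fun i => Finset.Icc (a i) (b i))).powerset.filter
        (fun A => A.Nonempty ∧ A.gcd id = 1)).card : ℤ) =
    ∑ d ∈ Finset.Icc 1 (b (ℓ - 1)),
      ArithmeticFunction.moebius d *
        (2 ^ (∑ i ∈ Finset.range ℓ, (b i / d - (a i - 1) / d)) - 1) :=
  card_relPrime_subsets_union_intervals_general ℓ a b ha hab hord
end
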